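/- Fix an integer d ≥ 3 and an infinite field F. Let e_0, ..., e_{d-1} be the standard basis of F^d, let X = ∪_{i=0}^{d-2} span{e_0, e_{i+1}}, and let f : X → F^d be the inclusion map. Then C_f = {Z_{f,a} : a ∈ F^d, a ≠ 0} is maximal of Littlestone dimension d − 1 (for every n ≥ d − 1 there is an (X, C_f)-labeled tree of depth n with Σ_{i=0}^{d-1} C(n, i) well-labeled leaves), even though f(X) is contained in a finite union of 2-dimensional subspaces of F^d. -/

import Mathlib

/-- The zero set of the linear combination of the components of `f` with coefficients `a`. -/
def zeroSet {X F : Type*} [Field F] {d : ℕ} (f : X → Fin d → F) (a : Fin d → F) : Set X :=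
  {c | ∑ i, a i * f c i = 0}

/-- The family of zero sets of nontrivial linear combinations of the components of `f`. -/
def zeroSets {X F : Type*} [Field F] {d : ℕ} (f : X → Fin d → F) : Set (Set X) :=
  {s | ∃ a : Fin d → F, a ≠ 0 ∧ s = zeroSet f a}

/-- The leaf `τ` of a binary tree of depth `n` with node labels `t` and leaf label `A`
is well-labeled. -/
def WellLabeledLeaf {X : Type*} (n : ℕ) (t : (k : ℕ) → (Fin k → Bool) → X)
    (A : Set X) (τ : Fin n → Bool) : Prop :=
  ∀ k : Fin n, (t k.val (fun j : Fin k.val => τ (Fin.castLE k.isLt.le j)) ∈ A) ↔ τ k = true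

/-! Fix distinct nonzero scalars `c₀, c₁, …`. Label a node at depth `k` whose path has `j`
ones by `e₀ + c_k e_{j+1}` (by `e₀` once `d ≤ j + 1`), and a leaf `τ` by the zero set of
`a_τ = e₀ - ∑ c_k⁻¹ e_{j_k+1}`, summed over the ones `k` of `τ`, where `j_k` counts the ones
before `k`. The `j_k` are distinct, so at a zero `k` of `τ` the node point pairs with `a_τ`
to `1` or `1 - c_k / c_{k'}` with `k' ≠ k`, never `0`, while at a one it pairs to `0`
exactly when `j_k + 1 < d`. Hence `τ` is well-labeled iff it has fewer than `d` ones, and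
there are `∑_{i<d} C(n, i)` such leaves. -/

open Finset

namespace BoolString

variable {n : ℕ}

def weight {k : ℕ} (σ : Fin k → Bool) : ℕ := #{j | σ j = true}

def prefixWeight (τ : Fin n → Bool) (k : Fin n) : ℕ := #{j | j < k ∧ τ j = true}

lemma weight_prefix (τ : Fin n → Bool) (k : Fin n) :
    weight (fun j : Fin k => τ (Fin.castLE k.isLt.le j)) = prefixWeight τ k := by
  refine card_bij (fun j _ => Fin.castLE k.isLt.le j) ?_
    (fun _ _ _ _ h => Fin.castLE_injective _ h) ?_
  · intro j hj
    simp only [mem_filter, mem_univ, true_and] at hj ⊢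
    exact ⟨j.isLt, hj⟩
  · intro j hj
    simp only [mem_filter, mem_univ, true_and] at hj
    exact ⟨⟨j, hj.1⟩, by simpa using hj.2, rfl⟩

lemma prefixWeight_lt_weight {τ : Fin n → Bool} {k : Fin n} (hk : τ k = true) :
    prefixWeight τ k < weight τ :=
  card_lt_card <| (ssubset_iff_of_subset fun j => by simp +contextual).2 ⟨k, by simp [hk]⟩

lemma prefixWeight_strictMonoOn (τ : Fin n → Bool) :
    StrictMonoOn (prefixWeight τ) {k | τ k = true} := fun k hk k' _ hkk' =>
  card_lt_card <| (ssubset_iff_of_subset fun j => by simp +contextual [lt_trans _ hkk']).2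
    ⟨k, by simp_all⟩

lemma forall_prefixWeight_lt_iff (τ : Fin n → Bool) (m : ℕ) :
    (∀ k, τ k = true → prefixWeight τ k < m) ↔ weight τ ≤ m := by
  refine ⟨fun h => ?_, fun h k hk => (prefixWeight_lt_weight hk).trans_le h⟩
  simpa [weight] using card_le_card_of_injOn (t := range m) (prefixWeight τ)
    (fun k hk => by simp_all) (by simpa using (prefixWeight_strictMonoOn τ).injOn)

def equivFinset : (Fin n → Bool) ≃ Finset (Fin n) where
  toFun τ := {j | τ j = true}
  invFun s j := decide (j ∈ s)
  left_inv τ := by ext; simp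
  right_inv s := by ext; simp

lemma card_weight_lt (m : ℕ) :
    Nat.card {τ : Fin n → Bool // weight τ < m} = ∑ i ∈ range m, n.choose i := by
  rw [Nat.card_congr (equivFinset.subtypeEquiv (p := fun τ => weight τ < m)
      (q := fun s => #s < m) fun τ => Iff.rfl),
    Nat.card_eq_fintype_card, Fintype.card_subtype,
    card_eq_sum_card_fiberwise (f := card) (t := range m) fun s hs => by simpa using hs]
  refine sum_congr rfl fun i hi => ?_
  have hcard (s : Finset (Fin n)) : #s < m ∧ #s = i ↔ #s = i :=
    and_iff_right_of_imp fun h => h ▸ mem_range.1 hi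
  simp only [filter_filter, hcard, univ_filter_card_eq, card_powersetCard, card_univ,
    Fintype.card_fin]

end BoolString

section Construction

open BoolString Function Submodule

variable {F : Type*} [Field F] {d n : ℕ}

/-- The standard basis vector `e_m` of `F^d`, with the convention `e_m = 0` for `d ≤ m`. -/
def stdVec (d m : ℕ) : Fin d → F := fun i => if (i : ℕ) = m then 1 else 0

lemma stdVec_of_lt {m : ℕ} (h : m < d) : (stdVec d m : Fin d → F) = Pi.single ⟨m, h⟩ 1 := by
  ext i
  simp [stdVec, Pi.single_apply, Fin.ext_iff]

lemma stdVec_of_le {m : ℕ} (h : d ≤ m) : (stdVec d m : Fin d → F) = 0 := by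
  ext i
  simp only [stdVec, Pi.zero_apply, ite_eq_right_iff, one_ne_zero, imp_false]
  omega

lemma dotProduct_stdVec (A : ℕ → F) (m : ℕ) :
    (fun i : Fin d => A i) ⬝ᵥ stdVec d m = if m < d then A m else 0 := by
  split_ifs with h
  · simp [stdVec_of_lt h]
  · simp [stdVec_of_le (not_lt.1 h)]

def nodePoint (x : F) (j : ℕ) : Fin d → F := stdVec d 0 + x • stdVec d (j + 1)

lemma nodePoint_mem_iUnion_span (hd : 2 ≤ d) (x : F) (j : ℕ) :
    nodePoint x j ∈ ⋃ i ∈ {i : Fin d | i ≠ ⟨0, by omega⟩},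
      (span F ({Pi.single (⟨0, by omega⟩ : Fin d) (1 : F), Pi.single i (1 : F)} :
        Set (Fin d → F)) : Set (Fin d → F)) := by
  rcases lt_or_ge (j + 1) d with h | h
  · refine Set.mem_biUnion (x := ⟨j + 1, h⟩) (by simp [Fin.ext_iff]) ?_
    rw [nodePoint, stdVec_of_lt (by omega), stdVec_of_lt h]
    exact add_mem (subset_span (by simp)) (smul_mem _ _ (subset_span (by simp)))
  · refine Set.mem_biUnion (x := ⟨1, by omega⟩) (by simp [Fin.ext_iff]) ?_
    rw [nodePoint, stdVec_of_lt (by omega), stdVec_of_le h, smul_zero, add_zero]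
    exact subset_span (by simp)

lemma exists_injective_ne {α : Type*} [Infinite α] (a : α) :
    ∃ c : ℕ → α, Injective c ∧ ∀ m, c m ≠ a := by
  let e := (Set.finite_singleton a).infinite_compl.natEmbedding
  exact ⟨fun m => e m, fun _ _ h => e.injective (Subtype.ext h), fun m => (e m).2⟩

lemma one_sub_mul_sum_inv_eq_zero_iff {ι : Type*} {c : ι → F} (hc : Injective c)
    (hc0 : ∀ i, c i ≠ 0) {s : Finset ι} (hs : (s : Set ι).Subsingleton) (k : ι) :
    1 - c k * ∑ i ∈ s, (c i)⁻¹ = 0 ↔ k ∈ s := by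
  obtain rfl | ⟨i, rfl⟩ : s = ∅ ∨ ∃ i, s = {i} := by
    simpa [Finset.coe_eq_singleton] using hs.eq_empty_or_singleton
  · simp
  · rw [Finset.sum_singleton, sub_eq_zero, eq_comm, mul_inv_eq_one₀ (hc0 i), hc.eq_iff,
      Finset.mem_singleton]

/-- Coordinate `j + 1` is chosen so that the leaf vector is orthogonal to the node point
`e₀ + c k • e_{j+1}` exactly at the (unique) `true` position `k` with `j` earlier `true`s. -/
def leafCoeff (c : ℕ → F) (τ : Fin n → Bool) : ℕ → F
  | 0 => 1
  | j + 1 => -∑ k ∈ {k | τ k = true ∧ prefixWeight τ k = j}, (c k)⁻¹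

def leafVec (c : ℕ → F) (τ : Fin n → Bool) : Fin d → F := fun i => leafCoeff c τ i

lemma leafVec_ne_zero (hd : 0 < d) (c : ℕ → F) (τ : Fin n → Bool) :
    (leafVec c τ : Fin d → F) ≠ 0 :=
  fun h => one_ne_zero (congrFun h ⟨0, hd⟩)

lemma leafVec_dotProduct_nodePoint_eq_zero_iff (hd : 0 < d) {c : ℕ → F} (hc : Injective c)
    (hc0 : ∀ m, c m ≠ 0) (τ : Fin n → Bool) (k : Fin n) :
    leafVec c τ ⬝ᵥ (nodePoint (c k) (prefixWeight τ k) : Fin d → F) = 0 ↔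
      τ k = true ∧ prefixWeight τ k + 1 < d := by
  unfold leafVec
  rw [nodePoint, dotProduct_add, dotProduct_smul, dotProduct_stdVec, dotProduct_stdVec,
    if_pos hd, smul_eq_mul]
  split_ifs with h
  · have hs : (({k' | τ k' = true ∧ prefixWeight τ k' = prefixWeight τ k} : Finset (Fin n)) :
        Set (Fin n)).Subsingleton := fun k₁ hk₁ k₂ hk₂ => by
      simp only [Finset.mem_coe, Finset.mem_filter, Finset.mem_univ, true_and] at hk₁ hk₂
      exact (prefixWeight_strictMonoOn τ).injOn hk₁.1 hk₂.1 (hk₁.2.trans hk₂.2.symm)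
    rw [leafCoeff, leafCoeff, mul_neg, ← sub_eq_add_neg,
      one_sub_mul_sum_inv_eq_zero_iff (c := fun k : Fin n => c k) (hc.comp Fin.val_injective)
        (fun _ => hc0 _) hs]
    simp [h]
  · simp [h, leafCoeff]

lemma wellLabeledLeaf_iff (hd : 0 < d) {c : ℕ → F} (hc : Injective c) (hc0 : ∀ m, c m ≠ 0)
    (τ : Fin n → Bool) :
    WellLabeledLeaf n (fun k σ => (nodePoint (c k) (weight σ) : Fin d → F))
      (zeroSet id (leafVec c τ)) τ ↔ weight τ < d := by
  change (∀ k : Fin n, leafVec c τ ⬝ᵥ (nodePoint (c k)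
    (weight fun j : Fin k => τ (Fin.castLE k.isLt.le j)) : Fin d → F) = 0 ↔ τ k = true) ↔ _
  simp only [weight_prefix, leafVec_dotProduct_nodePoint_eq_zero_iff hd hc hc0,
    and_iff_left_iff_imp, ← Nat.lt_sub_iff_add_lt, forall_prefixWeight_lt_iff,
    Nat.le_sub_one_iff_lt hd]

theorem exists_tree_card_wellLabeledLeaf [Infinite F] (hd : 0 < d) {X : Set (Fin d → F)}
    (hX : ∀ (x : F) j, nodePoint x j ∈ X) (n : ℕ) :
    ∃ (t : (k : ℕ) → (Fin k → Bool) → X) (L : (Fin n → Bool) → Set X),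
      (∀ τ, L τ ∈ zeroSets (fun x : X => (x : Fin d → F))) ∧
      Nat.card {τ : Fin n → Bool // WellLabeledLeaf n t (L τ) τ} =
        ∑ i ∈ Finset.range d, n.choose i := by
  obtain ⟨c, hc, hc0⟩ := exists_injective_ne (0 : F)
  refine ⟨fun k σ => ⟨nodePoint (c k) (weight σ), hX _ _⟩,
    fun τ => zeroSet _ (leafVec c τ), fun τ => ⟨_, leafVec_ne_zero hd c τ, rfl⟩, ?_⟩
  rw [← card_weight_lt]
  exact Nat.card_congr (Equiv.subtypeEquivRight (wellLabeledLeaf_iff hd hc hc0))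

lemma finrank_span_pair_single {ι : Type*} [DecidableEq ι] {i j : ι} (h : i ≠ j) :
    Module.finrank F (span F ({Pi.single i 1, Pi.single j 1} : Set (ι → F))) = 2 := by
  have hinj : Injective ![i, j] := by
    simpa [Injective, Fin.forall_fin_two] using ⟨h, h.symm⟩
  have := finrank_span_eq_card ((Pi.linearIndependent_single_one ι F).comp _ hinj)
  rwa [Set.range_comp, Matrix.range_cons_cons_empty, Set.image_pair, Fintype.card_fin] at this

lemma exists_finrank_two_cover (hd : 2 ≤ d) :
    ∃ (k : ℕ) (V : Fin k → Submodule F (Fin d → F)), (∀ i, Module.finrank F (V i) = 2) ∧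
      ∀ x ∈ ⋃ i ∈ {i : Fin d | i ≠ ⟨0, by omega⟩},
        (span F ({Pi.single (⟨0, by omega⟩ : Fin d) (1 : F), Pi.single i (1 : F)} :
          Set (Fin d → F)) : Set (Fin d → F)), ∃ i, x ∈ V i := by
  refine ⟨d - 1,
    fun m => span F {Pi.single ⟨0, by omega⟩ 1, Pi.single ⟨m + 1, by omega⟩ 1},
    fun m => finrank_span_pair_single (Fin.ne_of_val_ne (Nat.succ_ne_zero _).symm), ?_⟩
  simp only [Set.mem_iUnion₂]
  rintro x ⟨i, hi, hx⟩
  have hi : (i : ℕ) ≠ 0 := fun h => hi (Fin.ext h)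
  obtain ⟨m, rfl⟩ : ∃ m : Fin (d - 1), (⟨m + 1, by omega⟩ : Fin d) = i :=
    ⟨⟨i - 1, by omega⟩, Fin.ext (Nat.sub_add_cancel (Nat.pos_of_ne_zero hi))⟩
  exact ⟨m, hx⟩

end Construction

/-- For `d ≥ 3`, `F` an infinite field, `X` the union of the planes
`span {e_0, e_i}` (`i ≠ 0`) in `F^d` and `f : X → F^d` the inclusion, `C_f` is maximal of
Littlestone dimension `d - 1`: for every `n ≥ d - 1` there is an `(X, C_f)`-labeled tree
of depth `n` with `∑_{i=0}^{d-1} (n choose i)` well-labeled leaves, even though `f(X)` is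
covered by finitely many 2-dimensional subspaces. -/
theorem statement16 {F : Type*} [Field F] [Infinite F] {d : ℕ} (hd : 3 ≤ d)
    (Xs : Set (Fin d → F))
    (hXs : Xs = ⋃ i ∈ {i : Fin d | i ≠ ⟨0, by omega⟩},
      (Submodule.span F
        ({Pi.single (⟨0, by omega⟩ : Fin d) (1 : F), Pi.single i (1 : F)} : Set (Fin d → F)) :
        Set (Fin d → F))) :
    (∀ n : ℕ, d - 1 ≤ n →
      ∃ (t : (k : ℕ) → (Fin k → Bool) → Xs) (L : (Fin n → Bool) → Set Xs),
        (∀ τ, L τ ∈ zeroSets (fun x : Xs => (x : Fin d → F))) ∧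
        Nat.card {τ : Fin n → Bool // WellLabeledLeaf n t (L τ) τ} =
          ∑ i ∈ Finset.range d, n.choose i) ∧
    (∃ (k : ℕ) (V : Fin k → Submodule F (Fin d → F)),
      (∀ i, Module.finrank F (V i) = 2) ∧ ∀ x ∈ Xs, ∃ i, x ∈ V i) := by
  subst hXs
  exact ⟨fun n _ => exists_tree_card_wellLabeledLeaf (by omega)
      (nodePoint_mem_iUnion_span (by omega)) n,
    exists_finrank_two_cover (by omega)⟩
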